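/- Let G be a locally compact topological group with a left Haar measure dz, let X be a set equipped with an action ρ of G, and let φ : X → G satisfy φ(ρ(g)m) = g·φ(m)·g⁻¹ for all g ∈ G, m ∈ X. Define the 'ribbon' operator T on functions ψ : X → ℂ by (Tψ)(m) = ψ(ρ(φ(m)⁻¹)m), and for continuous compactly supported F : G × G → ℂ define (Π(F)ψ)(m) = ∫_G F(z, φ(m)) ψ(ρ(z⁻¹)m) dz. Then T is a bijection on the space of functions ψ : X → ℂ and it commutes with every Π(F): Π(F)(Tψ) = T(Π(F)ψ) pointwise for all continuous compactly supported F and all functions ψ for which the integrals exist (e.g. all bounded measurable ψ when X carries a measurable structure making ρ and φ measurable). -/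

import Mathlib

open MeasureTheory

/-- The representation `(Π(F)ψ)(m) = ∫_G F(z, φ(m)) ψ(ρ(z⁻¹)m) dz` of the quantum
double associated to a `G`-action `ρ` on `X` and an equivariant map `φ : X → G`. -/
noncomputable def qdRep {G X : Type*} [Group G] [MeasurableSpace G]
    (μ : Measure G) (ρ : G → X → X) (φ : X → G)
    (F : G × G → ℂ) (ψ : X → ℂ) : X → ℂ :=
  fun m => ∫ z, F (z, φ m) * ψ (ρ z⁻¹ m) ∂μ

/-!
The operator `T` is precomposition with the twist `r m = ρ(φ(m)⁻¹) m`. Because `φ(m)` commutes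
with itself, equivariance of `φ` gives `φ ∘ r = φ`, so `r` is inverted by `m ↦ ρ(φ(m)) m`; and
conjugating `φ(m)` by `g` gives `r (ρ g m) = ρ g (r m)`. These two identities turn the integrand
of `Π(F)(Tψ)(m)` into that of `T(Π(F)ψ)(m)` pointwise in `z`.
-/

section Ribbon

variable {G X : Type*} [Group G] {ρ : G → X → X} {φ : X → G}

theorem map_smul_eq_of_commute (hφ : ∀ g m, φ (ρ g m) = g * φ m * g⁻¹) {g : G} {m : X}
    (h : Commute g (φ m)) : φ (ρ g m) = φ m := by
  rw [hφ, h.eq, mul_inv_cancel_right]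

variable (ρ φ) in
def ribbonMap (m : X) : X := ρ (φ m)⁻¹ m

theorem map_ribbonMap (hφ : ∀ g m, φ (ρ g m) = g * φ m * g⁻¹) (m : X) :
    φ (ribbonMap ρ φ m) = φ m :=
  map_smul_eq_of_commute hφ (Commute.refl (φ m)).inv_left

theorem ribbonMap_smul (hρ_mul : ∀ g h m, ρ (g * h) m = ρ g (ρ h m))
    (hφ : ∀ g m, φ (ρ g m) = g * φ m * g⁻¹) (g : G) (m : X) :
    ribbonMap ρ φ (ρ g m) = ρ g (ribbonMap ρ φ m) := by
  rw [ribbonMap, ribbonMap, hφ, ← hρ_mul, ← hρ_mul]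
  congr 1
  group

theorem ribbonMap_bijective (hρ_one : ∀ m, ρ 1 m = m)
    (hρ_mul : ∀ g h m, ρ (g * h) m = ρ g (ρ h m)) (hφ : ∀ g m, φ (ρ g m) = g * φ m * g⁻¹) :
    Function.Bijective (ribbonMap ρ φ) := by
  have h_fix : ∀ m, φ (ρ (φ m) m) = φ m := fun m => map_smul_eq_of_commute hφ (Commute.refl _)
  refine Function.bijective_iff_has_inverse.mpr ⟨fun m => ρ (φ m) m, fun m => ?_, fun m => ?_⟩
  · dsimp only
    rw [map_ribbonMap hφ, ribbonMap, ← hρ_mul, mul_inv_cancel, hρ_one]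
  · rw [ribbonMap, h_fix, ← hρ_mul, inv_mul_cancel, hρ_one]

theorem qdRep_comp_eq_comp_qdRep [MeasurableSpace G] (μ : Measure G) (F : G × G → ℂ)
    (ψ : X → ℂ) {r : X → X} (hφr : ∀ m, φ (r m) = φ m) (hr : ∀ g m, r (ρ g m) = ρ g (r m)) :
    qdRep μ ρ φ F (ψ ∘ r) = qdRep μ ρ φ F ψ ∘ r := by
  funext m
  simp only [qdRep, Function.comp_apply, hφr, hr]

end Ribbon

theorem ribbon_operator_bijective_and_commutes_general
    {G : Type*} [Group G] [TopologicalSpace G]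
    [MeasurableSpace G]
    (μ : Measure G)
    {X : Type*} (ρ : G → X → X)
    (hρ_one : ∀ m, ρ 1 m = m)
    (hρ_mul : ∀ g h m, ρ (g * h) m = ρ g (ρ h m))
    (φ : X → G) (hφ : ∀ g m, φ (ρ g m) = g * φ m * g⁻¹)
    (T : (X → ℂ) → (X → ℂ))
    (hT : ∀ (ψ : X → ℂ) (m : X), T ψ m = ψ (ρ (φ m)⁻¹ m)) :
    Function.Bijective T ∧
    (∀ F : G × G → ℂ, Continuous F → HasCompactSupport F →
      ∀ (ψ : X → ℂ) (m : X), qdRep μ ρ φ F (T ψ) m = T (qdRep μ ρ φ F ψ) m) := by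
  obtain rfl : T = fun ψ => ψ ∘ ribbonMap ρ φ := funext fun ψ => funext (hT ψ)
  exact ⟨(ribbonMap_bijective hρ_one hρ_mul hφ).comp_right, fun F _ _ ψ m =>
    congrFun (qdRep_comp_eq_comp_qdRep μ F ψ (map_ribbonMap hφ) (ribbonMap_smul hρ_mul hφ)) m⟩

/-- The ribbon operator `(Tψ)(m) = ψ(ρ(φ(m)⁻¹)m)` is a bijection on functions
`X → ℂ` and commutes with every operator `Π(F)` for `F : G × G → ℂ` continuous with
compact support. -/
theorem ribbon_operator_bijective_and_commutes
    {G : Type*} [Group G] [TopologicalSpace G] [IsTopologicalGroup G]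
    [LocallyCompactSpace G] [MeasurableSpace G] [BorelSpace G]
    (μ : Measure G) [μ.IsHaarMeasure]
    {X : Type*} (ρ : G → X → X)
    (hρ_one : ∀ m, ρ 1 m = m)
    (hρ_mul : ∀ g h m, ρ (g * h) m = ρ g (ρ h m))
    (φ : X → G) (hφ : ∀ g m, φ (ρ g m) = g * φ m * g⁻¹)
    (T : (X → ℂ) → (X → ℂ))
    (hT : ∀ (ψ : X → ℂ) (m : X), T ψ m = ψ (ρ (φ m)⁻¹ m)) :
    Function.Bijective T ∧
    (∀ F : G × G → ℂ, Continuous F → HasCompactSupport F →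
      ∀ (ψ : X → ℂ) (m : X), qdRep μ ρ φ F (T ψ) m = T (qdRep μ ρ φ F ψ) m) :=
  ribbon_operator_bijective_and_commutes_general μ ρ hρ_one hρ_mul φ hφ T hT
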